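/- arXiv:2605.20387 — 5 statements merged into one kernel-verified Lean document; each statement's English description precedes it below -/
import Mathlib

section
/- Let x : ℕ → Bool be a shift schedule satisfying the sliding-window constraint that every window of L consecutive shifts contains at most δ working shifts, where 1 ≤ δ ≤ L. If the operator works at least W shifts in total within {0, ..., T-1} (i.e., at least W values t < T have x t = true), then T ≥ (⌈W / δ⌉ - 1) · L + (W - (⌈W / δ⌉ - 1) · δ). -/
theorem count_window_bound (x : ℕ → Bool) (L δ : ℕ) (hL : 1 ≤ L)
    (hwin : ∀ a : ℕ, ((Finset.Ico a (a + L)).filter (fun t => x t = true)).card ≤ δ) :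
    ∀ T : ℕ, ((Finset.range T).filter (fun t => x t = true)).card
      ≤ (T / L) * δ + min (T % L) δ := by
  intro T
  induction T using Nat.strong_induction_on with
  | _ T ih =>
    by_cases h : T < L
    · have h1 : ((Finset.range T).filter (fun t => x t = true)).card ≤ T := by
        simpa using Finset.card_filter_le (Finset.range T) (fun t => x t = true)
      have h2 : ((Finset.range T).filter (fun t => x t = true)).card ≤ δ := by
        refine le_trans (Finset.card_le_card ?_) (hwin 0)
        intro t ht
        simp only [Finset.mem_filter, Finset.mem_range] at ht
        simp only [Finset.mem_filter, Finset.mem_Ico]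
        exact ⟨⟨Nat.zero_le _, by omega⟩, ht.2⟩
      rw [Nat.div_eq_of_lt h, Nat.mod_eq_of_lt h, zero_mul, zero_add]
      exact le_min h1 h2
    · push_neg at h
      have hsplit : Finset.range T = Finset.range (T - L) ∪ Finset.Ico (T - L) T := by
        rw [Finset.range_eq_Ico]
        rw [Finset.range_eq_Ico]; exact (Finset.Ico_union_Ico_eq_Ico (Nat.zero_le (T - L)) (by omega : T - L ≤ T)).symm
      have h2 : ((Finset.Ico (T - L) T).filter (fun t => x t = true)).card ≤ δ := by
        have := hwin (T - L)
        have he : T - L + L = T := by omega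
        rwa [he] at this
      have h1 := ih (T - L) (by omega)
      have hdiv : T / L = (T - L) / L + 1 := by
        conv_lhs => rw [show T = (T - L) + L by omega]
        rw [Nat.add_div_right _ (by omega)]
      have hmod : T % L = (T - L) % L := by
        conv_lhs => rw [show T = (T - L) + L by omega]
        rw [Nat.add_mod_right]
      calc ((Finset.range T).filter (fun t => x t = true)).card
          ≤ ((Finset.range (T - L)).filter (fun t => x t = true)).card
            + ((Finset.Ico (T - L) T).filter (fun t => x t = true)).card := by
            rw [hsplit, Finset.filter_union]; exact Finset.card_union_le _ _
        _ ≤ ((T - L) / L) * δ + min ((T - L) % L) δ + δ := Nat.add_le_add h1 h2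
        _ = (T / L) * δ + min (T % L) δ := by rw [hdiv, hmod, add_mul, one_mul]; ring

/-- Horizon lower bound: under a sliding-window constraint `(δ, L)` with
`1 ≤ δ ≤ L`, accumulating `W` working shifts within `{0, ..., T-1}` requires
`T ≥ (⌈W/δ⌉ - 1) · L + (W - (⌈W/δ⌉ - 1) · δ)`. -/
theorem horizon_lower_bound (x : ℕ → Bool) (L δ W T : ℕ)
    (hδ : 1 ≤ δ) (hδL : δ ≤ L)
    (hwin : ∀ a : ℕ, ((Finset.Ico a (a + L)).filter (fun t => x t = true)).card ≤ δ)
    (hW : W ≤ ((Finset.range T).filter (fun t => x t = true)).card) :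
    ((W + δ - 1) / δ - 1) * L + (W - ((W + δ - 1) / δ - 1) * δ) ≤ T := by
  rcases Nat.eq_zero_or_pos W with rfl | hWpos
  · have h0 : (δ - 1) / δ = 0 := Nat.div_eq_of_lt (by omega)
    simp [h0]
  · have hA : ((W + δ - 1) / δ - 1) * δ < W := by
      have h1 : (W + δ - 1) / δ * δ ≤ W + δ - 1 := Nat.div_mul_le_self _ _
      have h2 : ((W + δ - 1) / δ - 1) * δ = (W + δ - 1) / δ * δ - δ := by
        rw [Nat.sub_mul, one_mul]
      omega
    have hB : W ≤ ((W + δ - 1) / δ - 1) * δ + δ := by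
      have h2 : ((W + δ - 1) / δ - 1) * δ = (W + δ - 1) / δ * δ - δ := by
        rw [Nat.sub_mul, one_mul]
      have e1 := Nat.div_add_mod (W + δ - 1) δ
      have e2 : (W + δ - 1) % δ < δ := Nat.mod_lt _ (by omega)
      have e3 : (W + δ - 1) / δ * δ = δ * ((W + δ - 1) / δ) := Nat.mul_comm _ _
      omega
    have hcount := count_window_bound x L δ (by omega) hwin T
    have hqT : T / L * L ≤ T := Nat.div_mul_le_self T L
    have hTeq := Nat.div_add_mod T L
    have hsL : T % L < L := Nat.mod_lt _ (by omega)
    have hmin : min (T % L) δ ≤ T % L := min_le_left _ _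
    rcases lt_trichotomy (T / L) ((W + δ - 1) / δ - 1) with hlt | heq | hgt
    · exfalso
      have h1 : (T / L + 1) * δ ≤ ((W + δ - 1) / δ - 1) * δ :=
        Nat.mul_le_mul_right δ (by omega)
      have h2 : (T / L + 1) * δ = T / L * δ + δ := by rw [add_mul, one_mul]
      have hminδ : min (T % L) δ ≤ δ := min_le_right _ _
      omega
    · have h1 : T / L * L = ((W + δ - 1) / δ - 1) * L := by rw [heq]
      have h2 : T / L * δ = ((W + δ - 1) / δ - 1) * δ := by rw [heq]
      have h3 : L * (T / L) = T / L * L := Nat.mul_comm _ _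
      omega
    · have h1 : ((W + δ - 1) / δ - 1 + 1) * L ≤ T / L * L :=
        Nat.mul_le_mul_right L (by omega)
      have h2 : ((W + δ - 1) / δ - 1 + 1) * L = ((W + δ - 1) / δ - 1) * L + L := by
        rw [add_mul, one_mul]
      omega
end

section
/- Let C be a finite set of MaxW constraints, each c ∈ C given by an interval I_c ⊆ ℕ (a finite set of consecutive shifts) and a slack s_c ≥ 0 (the minimum required number of rest shifts in I_c). Suppose the intervals {I_c} are refined by a finite partition Q of their union into subintervals, such that each I_c is a disjoint union of subintervals from Q. Let d : Q → ℕ assign rest amounts with d q ≤ |q| for each q ∈ Q, and suppose for every c ∈ C, the sum of d q over subintervals q ⊆ I_c is at least s_c. Define the capped assignment d' q = min (d q) (cap q), where cap q is the maximum of s_c over all constraints c with q ⊆ I_c (and cap q = 0 if no constraint contains q). Then for every c ∈ C, the sum of d' q over subintervals q ⊆ I_c is still at least s_c. -/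
/-!
Fix a constraint `c`. If no subinterval of `I c` is actually capped, the capped sum equals the
original one. Otherwise some `q ⊆ I c` is capped, its capped value is a maximum of slacks over
constraints containing `q`, among them `c`, so that single term already reaches `s c`.
-/

open Finset

theorem Finset.le_sum_min_of_le_sum {α M : Type*} [AddCommMonoid M] [LinearOrder M]
    [IsOrderedAddMonoid M] [CanonicallyOrderedAdd M] {S : Finset α} {f g : α → M} {b : M}
    (hf : b ≤ ∑ x ∈ S, f x) (hg : ∀ x ∈ S, b ≤ g x) :
    b ≤ ∑ x ∈ S, min (f x) (g x) := by
  by_cases hle : ∀ x ∈ S, f x ≤ g x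
  · calc b ≤ ∑ x ∈ S, f x := hf
      _ = ∑ x ∈ S, min (f x) (g x) := sum_congr rfl fun x hx => (min_eq_left (hle x hx)).symm
  · push Not at hle
    obtain ⟨x, hx, hgx⟩ := hle
    calc b ≤ g x := hg x hx
      _ = min (f x) (g x) := (min_eq_right hgx.le).symm
      _ ≤ ∑ x ∈ S, min (f x) (g x) :=
        single_le_sum (f := fun x => min (f x) (g x)) (fun _ _ => zero_le) hx

theorem cap_preserves_feasibility_general {ι : Type*} (C : Finset ι)
    (I : ι → Finset ℕ) (s : ι → ℕ) (Q : Finset (Finset ℕ))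
    (d : Finset ℕ → ℕ)
    (hfeas : ∀ c ∈ C, s c ≤ ∑ q ∈ Q.filter (fun q => q ⊆ I c), d q) :
    ∀ c ∈ C, s c ≤ ∑ q ∈ Q.filter (fun q => q ⊆ I c),
      min (d q) ((C.filter (fun c' => q ⊆ I c')).sup s) := by
  intro c hc
  refine le_sum_min_of_le_sum (hfeas c hc) fun q hq => ?_
  exact le_sup (mem_filter.mpr ⟨hc, (mem_filter.mp hq).2⟩)

/-- Capping per-subinterval rest amounts at the maximum slack of the
constraints containing the subinterval preserves feasibility of the
decomposed MaxW constraints (C5), justifying domain reduction (C6). -/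
theorem cap_preserves_feasibility {ι : Type*} (C : Finset ι)
    (I : ι → Finset ℕ) (s : ι → ℕ) (Q : Finset (Finset ℕ))
    (hIcc : ∀ c ∈ C, ∃ u v : ℕ, I c = Finset.Icc u v)
    (hQIcc : ∀ q ∈ Q, ∃ u v : ℕ, q = Finset.Icc u v)
    (hdisj : ∀ q ∈ Q, ∀ q' ∈ Q, q ≠ q' → Disjoint q q')
    (hpart : ∀ c ∈ C, (Q.filter (fun q => q ⊆ I c)).biUnion id = I c)
    (d : Finset ℕ → ℕ)
    (hd : ∀ q ∈ Q, d q ≤ q.card)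
    (hfeas : ∀ c ∈ C, s c ≤ ∑ q ∈ Q.filter (fun q => q ⊆ I c), d q) :
    ∀ c ∈ C, s c ≤ ∑ q ∈ Q.filter (fun q => q ⊆ I c),
      min (d q) ((C.filter (fun c' => q ⊆ I c')).sup s) :=
  cap_preserves_feasibility_general C I s Q d hfeas
end

section
/- Let n tasks be given with processing times p_j ∈ ℕ (p_j ≥ 1), release shifts r_j, and deadlines d_j, over a finite discrete horizon. Consider the earliest-deadline-first (EDF) rule: at each shift t (processed in increasing order), among tasks j that are released (r_j ≤ t) and not yet fully processed, schedule one with minimal deadline d_j (if any such task exists). Then: if there exists any feasible preemptive schedule (each task j receiving p_j shifts within [r_j, d_j), at most one task per shift), the EDF schedule is also feasible, i.e., EDF completes each task j by its deadline d_j. -/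
/-!
Exchange argument. Suppose a feasible schedule `σ` agrees with EDF before shift `T`, and EDF
runs task `i` at `T`. Since `i` is unfinished at `T`, `σ` runs `i` at some shift `u ≥ T` with
`u < d i`. Swapping the contents of `T` and `u` keeps `σ` feasible: the task `σ` ran at `T` was
released and unfinished then, so EDF's choice gives `d i ≤` its deadline. Thus some feasible
schedule agrees with EDF before any given shift, in particular before `d j`, where it has
completed task `j`.
-/

/-- Remaining processing times under the earliest-deadline-first (EDF) rule:
at each shift `t`, among released, unfinished tasks, one with minimal deadline
is processed for one unit (ties broken arbitrarily via the list order). -/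
noncomputable def edfRem (n : ℕ) (p r d : Fin n → ℕ) : ℕ → Fin n → ℕ
  | 0 => p
  | t + 1 => fun j =>
      match (Finset.univ.filter
          (fun i : Fin n => r i ≤ t ∧ 0 < edfRem n p r d t i)).toList.argmin d with
      | some i => if i = j then edfRem n p r d t j - 1 else edfRem n p r d t j
      | none => edfRem n p r d t j

open Finset

section Schedule

variable {α : Type*} [DecidableEq α]

/-- `σ t = some j` means that task `j` is processed during shift `t`. -/
def IsFeasibleSchedule (p r d : α → ℕ) (σ : ℕ → Option α) : Prop :=
  ∀ j, (∀ t, σ t = some j → r j ≤ t ∧ t < d j) ∧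
    ((Ico (r j) (d j)).filter (fun t => σ t = some j)).card = p j

def countBefore (σ : ℕ → Option α) (t : ℕ) (j : α) : ℕ :=
  #{s ∈ range t | σ s = some j}

variable {σ τ : ℕ → Option α} {t : ℕ} {j : α}

lemma countBefore_succ :
    countBefore σ (t + 1) j = countBefore σ t j + if σ t = some j then 1 else 0 := by
  unfold countBefore
  rw [range_add_one, filter_insert]
  split_ifs <;> simp [card_insert_of_notMem]

lemma countBefore_congr (h : Set.EqOn σ τ (Set.Iio t)) :
    countBefore σ t j = countBefore τ t j := by
  unfold countBefore
  congr 1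
  exact filter_congr fun s hs => by rw [h (mem_range.mp hs)]

variable {p r d : α → ℕ}

lemma IsFeasibleSchedule.countBefore_le (hσ : IsFeasibleSchedule p r d σ) :
    countBefore σ t j ≤ p j := by
  rw [← (hσ j).2]
  refine card_le_card fun s hs => ?_
  rw [mem_filter] at hs ⊢
  exact ⟨mem_Ico.mpr ((hσ j).1 s hs.2), hs.2⟩

lemma IsFeasibleSchedule.countBefore_lt (hσ : IsFeasibleSchedule p r d σ)
    (ht : σ t = some j) : countBefore σ t j < p j := by
  have := hσ.countBefore_le (t := t + 1) (j := j)
  rw [countBefore_succ, if_pos ht] at this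
  omega

lemma IsFeasibleSchedule.le_countBefore (hσ : IsFeasibleSchedule p r d σ)
    (h : ∀ u, t ≤ u → σ u ≠ some j) : p j ≤ countBefore σ t j := by
  rw [← (hσ j).2]
  refine card_le_card fun s hs => ?_
  rw [mem_filter] at hs ⊢
  exact ⟨mem_range.mpr (not_le.mp fun hts => h s hts hs.2), hs.2⟩

lemma IsFeasibleSchedule.exists_ge_of_countBefore_lt (hσ : IsFeasibleSchedule p r d σ)
    (h : countBefore σ t j < p j) : ∃ u, t ≤ u ∧ σ u = some j := by
  by_contra! hnone
  exact (hσ.le_countBefore hnone).not_gt h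

lemma IsFeasibleSchedule.comp_perm (hσ : IsFeasibleSchedule p r d σ) (π : Equiv.Perm ℕ)
    (hπ : ∀ j t, σ (π t) = some j → r j ≤ t ∧ t < d j) :
    IsFeasibleSchedule p r d (σ ∘ π) := by
  refine fun j => ⟨hπ j, ?_⟩
  rw [← (hσ j).2]
  refine card_nbij' π π.symm (fun t ht => ?_) (fun s hs => ?_) (fun t _ => π.symm_apply_apply t)
    (fun s _ => π.apply_symm_apply s)
  · rw [mem_coe, mem_filter] at ht ⊢
    exact ⟨mem_Ico.mpr ((hσ j).1 _ ht.2), ht.2⟩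
  · rw [mem_coe, mem_filter] at hs ⊢
    have hs' : σ (π (π.symm s)) = some j := by rw [π.apply_symm_apply]; exact hs.2
    exact ⟨mem_Ico.mpr (hπ j _ hs'), hs'⟩

lemma IsFeasibleSchedule.comp_swap (hσ : IsFeasibleSchedule p r d σ) {u : ℕ} {i : α}
    (htu : t ≤ u) (hu : σ u = some i) (hri : r i ≤ t)
    (hdi : ∀ k, σ t = some k → d i ≤ d k) :
    IsFeasibleSchedule p r d (σ ∘ Equiv.swap t u) := by
  have hud : u < d i := ((hσ i).1 u hu).2
  refine hσ.comp_perm _ fun k s hs => ?_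
  rcases eq_or_ne s t with rfl | hst
  · rw [Equiv.swap_apply_left, hu, Option.some_inj] at hs
    subst hs
    exact ⟨hri, htu.trans_lt hud⟩
  rcases eq_or_ne s u with rfl | hsu
  · rw [Equiv.swap_apply_right] at hs
    have hk := (hσ k).1 t hs
    exact ⟨hk.1.trans htu, hud.trans_le (hdi k hs)⟩
  · rw [Equiv.swap_apply_of_ne_of_ne hst hsu] at hs
    exact (hσ k).1 s hs

end Schedule

section EDF

variable {n : ℕ} {p r d : Fin n → ℕ} {t : ℕ} {i j : Fin n}

noncomputable def edfChoice (n : ℕ) (p r d : Fin n → ℕ) (t : ℕ) : Option (Fin n) :=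
  (univ.filter (fun i : Fin n => r i ≤ t ∧ 0 < edfRem n p r d t i)).toList.argmin d

lemma edfRem_succ :
    edfRem n p r d (t + 1) j =
      match edfChoice n p r d t with
      | some i => if i = j then edfRem n p r d t j - 1 else edfRem n p r d t j
      | none => edfRem n p r d t j :=
  rfl

lemma edfChoice_spec (h : edfChoice n p r d t = some i) :
    r i ≤ t ∧ 0 < edfRem n p r d t i := by
  simpa using List.argmin_mem (Option.mem_def.mpr h)

lemma edfChoice_le (h : edfChoice n p r d t = some i) (hj : r j ≤ t)
    (hj' : 0 < edfRem n p r d t j) : d i ≤ d j :=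
  List.le_of_mem_argmin (by simpa using ⟨hj, hj'⟩) (Option.mem_def.mpr h)

lemma edfRem_eq_zero_of_edfChoice_eq_none (h : edfChoice n p r d t = none) (hj : r j ≤ t) :
    edfRem n p r d t j = 0 := by
  by_contra hne
  have hmem : j ∈ (univ.filter (fun i : Fin n => r i ≤ t ∧ 0 < edfRem n p r d t i)).toList := by
    simpa using ⟨hj, Nat.pos_of_ne_zero hne⟩
  simp [List.argmin_eq_none.mp h] at hmem

lemma edfRem_add_countBefore :
    edfRem n p r d t j + countBefore (edfChoice n p r d) t j = p j := by
  induction t with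
  | zero => simp [edfRem, countBefore]
  | succ t ih =>
    rw [edfRem_succ, countBefore_succ]
    rcases hc : edfChoice n p r d t with _ | i
    · simpa using ih
    · have hpos := (edfChoice_spec hc).2
      by_cases hij : i = j
      · subst hij
        simp only [if_true]
        omega
      · simpa [hij] using ih

lemma edfRem_add_countBefore_of_eqOn {σ : ℕ → Option (Fin n)}
    (h : Set.EqOn σ (edfChoice n p r d) (Set.Iio t)) :
    edfRem n p r d t j + countBefore σ t j = p j := by
  rw [countBefore_congr h]
  exact edfRem_add_countBefore

lemma IsFeasibleSchedule.exists_eqOn_edfChoice_succ {σ : ℕ → Option (Fin n)} {T : ℕ}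
    (hσ : IsFeasibleSchedule p r d σ) (hagree : Set.EqOn σ (edfChoice n p r d) (Set.Iio T)) :
    ∃ σ' : ℕ → Option (Fin n), IsFeasibleSchedule p r d σ' ∧
      Set.EqOn σ' (edfChoice n p r d) (Set.Iio (T + 1)) := by
  have hrem (k : Fin n) : edfRem n p r d T k + countBefore σ T k = p k :=
    edfRem_add_countBefore_of_eqOn hagree
  have hrun (k : Fin n) (hk : σ T = some k) : r k ≤ T ∧ 0 < edfRem n p r d T k :=
    ⟨((hσ k).1 T hk).1, by have := hσ.countBefore_lt hk; have := hrem k; omega⟩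
  have extend (σ' : ℕ → Option (Fin n)) (hpre : Set.EqOn σ' σ (Set.Iio T))
      (hT : σ' T = edfChoice n p r d T) :
      Set.EqOn σ' (edfChoice n p r d) (Set.Iio (T + 1)) := fun s hs => by
    rcases Nat.lt_succ_iff_lt_or_eq.mp hs with hs | rfl
    · exact (hpre hs).trans (hagree hs)
    · exact hT
  rcases hc : edfChoice n p r d T with _ | i
  · refine ⟨σ, hσ, extend σ (fun _ _ => rfl) ?_⟩
    rw [hc, Option.eq_none_iff_forall_ne_some]
    intro k hk
    obtain ⟨hrk, hpos⟩ := hrun k hk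
    have := edfRem_eq_zero_of_edfChoice_eq_none hc hrk
    omega
  · obtain ⟨hri, hpos⟩ := edfChoice_spec hc
    obtain ⟨u, hTu, hu⟩ :=
      hσ.exists_ge_of_countBefore_lt (t := T) (j := i) (by have := hrem i; omega)
    refine ⟨σ ∘ Equiv.swap T u, hσ.comp_swap hTu hu hri fun k hk => ?_, extend _ ?_ ?_⟩
    · exact edfChoice_le hc (hrun k hk).1 (hrun k hk).2
    · intro s hs
      exact congrArg σ (Equiv.swap_apply_of_ne_of_ne hs.ne (hs.trans_le hTu).ne)
    · simp [hu, hc]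

lemma IsFeasibleSchedule.exists_eqOn_edfChoice {σ : ℕ → Option (Fin n)}
    (hσ : IsFeasibleSchedule p r d σ) (T : ℕ) :
    ∃ σ' : ℕ → Option (Fin n), IsFeasibleSchedule p r d σ' ∧
      Set.EqOn σ' (edfChoice n p r d) (Set.Iio T) := by
  induction T with
  | zero => exact ⟨σ, hσ, by simp⟩
  | succ T ih =>
    obtain ⟨σ', hσ', hagree⟩ := ih
    exact hσ'.exists_eqOn_edfChoice_succ hagree

end EDF

theorem edf_optimal_general (n : ℕ) (p r d : Fin n → ℕ)
    (hfeas : ∃ σ : ℕ → Option (Fin n),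
      ∀ j, (∀ t, σ t = some j → r j ≤ t ∧ t < d j) ∧
        ((Finset.Ico (r j) (d j)).filter (fun t => σ t = some j)).card = p j) :
    ∀ j, edfRem n p r d (d j) j = 0 := by
  obtain ⟨σ₀, hσ₀⟩ := hfeas
  intro j
  obtain ⟨σ, hσ, hagree⟩ := IsFeasibleSchedule.exists_eqOn_edfChoice hσ₀ (d j)
  have hsum : edfRem n p r d (d j) j + countBefore σ (d j) j = p j :=
    edfRem_add_countBefore_of_eqOn hagree
  have hdone : p j ≤ countBefore σ (d j) j :=
    hσ.le_countBefore fun u hu hσu => (((hσ j).1 u hσu).2.trans_le hu).false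
  omega

/-- Optimality of the Jackson Preemptive Schedule (EDF) in discrete time: if
any feasible preemptive single-machine schedule exists, then EDF completes
every task by its deadline. -/
theorem edf_optimal (n : ℕ) (p r d : Fin n → ℕ) (hp : ∀ j, 1 ≤ p j)
    (hfeas : ∃ σ : ℕ → Option (Fin n),
      ∀ j, (∀ t, σ t = some j → r j ≤ t ∧ t < d j) ∧
        ((Finset.Ico (r j) (d j)).filter (fun t => σ t = some j)).card = p j) :
    ∀ j, edfRem n p r d (d j) j = 0 :=
  edf_optimal_general n p r d hfeas
end

section
/- Let x : ℕ → Bool be a shift schedule and suppose it satisfies the constraint: between any two working shifts there are at least r rest shifts, i.e., if x s = true and x t = true with s < t then t - s ≥ r + 1. Then x satisfies the sliding-window MaxW constraint with window length L and bound δ = ⌈L / (r + 1)⌉: every window of L consecutive shifts contains at most ⌈L / (r + 1)⌉ working shifts. -/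
/-- A minimum-rest-period rule (at least `r` rest shifts between any two
working shifts) implies the sliding-window MaxW constraint with bound
`⌈L / (r + 1)⌉` for every window of `L` consecutive shifts. -/
theorem min_rest_implies_sliding_maxW (x : ℕ → Bool) (r L : ℕ)
    (hrest : ∀ s t : ℕ, x s = true → x t = true → s < t → r + 1 ≤ t - s) :
    ∀ a : ℕ,
      ((Finset.Ico a (a + L)).filter (fun t => x t = true)).card ≤
        (L + r) / (r + 1) := by
  intro a
  have key : ∀ s ∈ (Finset.Ico a (a + L)).filter (fun t => x t = true),
      ∀ t ∈ (Finset.Ico a (a + L)).filter (fun t => x t = true),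
      s < t → (s - a) / (r + 1) < (t - a) / (r + 1) := by
    intro s hs t ht hst
    simp only [Finset.mem_filter, Finset.mem_Ico] at hs ht
    have hgap := hrest s t hs.2 ht.2 hst
    have h1 : s - a + (r + 1) ≤ t - a := by omega
    calc (s - a) / (r + 1) < (s - a) / (r + 1) + 1 := Nat.lt_succ_self _
      _ = (s - a + (r + 1)) / (r + 1) := by
          rw [Nat.add_div_right _ (Nat.succ_pos r)]
      _ ≤ (t - a) / (r + 1) := Nat.div_le_div_right h1
  have := Finset.card_le_card_of_injOn (fun t => (t - a) / (r + 1))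
    (fun t ht => ?_) (fun s hs t ht h => ?_)
    (s := (Finset.Ico a (a + L)).filter (fun t => x t = true))
    (t := Finset.range ((L + r) / (r + 1)))
  · simpa using this
  · simp only [Finset.mem_coe, Finset.mem_filter, Finset.mem_Ico] at ht
    simp only [Finset.mem_coe, Finset.mem_range]
    have h2 : t - a + (r + 1) ≤ L + r := by omega
    have : (t - a) / (r + 1) < (t - a + (r + 1)) / (r + 1) := by
      rw [Nat.add_div_right _ (Nat.succ_pos r)]; exact Nat.lt_succ_self _
    exact lt_of_lt_of_le this (Nat.div_le_div_right h2)
  · by_contra hne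
    rcases lt_or_gt_of_ne hne with hlt | hlt
    · exact absurd h (ne_of_lt (key s hs t ht hlt))
    · exact absurd h.symm (ne_of_lt (key t ht s hs hlt))
end

section
/- Consider n tasks on a single machine, task j with processing time p_j, release shift r_j, and deadline d_j. Suppose that for every pair a ≤ b, the sum of p_j over tasks j with a ≤ r_j and d_j ≤ b is at most b - a. Then a feasible preemptive schedule exists: there is a function σ : ℕ → Option (Fin n) such that each task j is assigned exactly p_j shifts t with r_j ≤ t < d_j. -/
open Finset

lemma key_load (n : ℕ) (p r d : Fin n → ℕ)
    (hload : ∀ a b : ℕ, a ≤ b →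
      ∑ j ∈ Finset.univ.filter (fun j => a ≤ r j ∧ d j ≤ b), p j ≤ b - a) :
    ∀ J : Finset (Fin n), (∀ j ∈ J, r j < d j) →
      ∑ j ∈ J, p j ≤ (J.biUnion fun j => Finset.Ico (r j) (d j)).card := by
  intro J
  induction J using Finset.strongInduction with
  | _ J IH =>
    intro hJ
    rcases J.eq_empty_or_nonempty with rfl | hne
    · simp
    set U : Finset ℕ := J.biUnion fun j => Finset.Ico (r j) (d j) with hU
    obtain ⟨j0, hj0, hmin⟩ := J.exists_min_image r hne
    set a := r j0 with ha
    have haU : a ∈ U := by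
      refine Finset.mem_biUnion.mpr ⟨j0, hj0, ?_⟩
      exact Finset.mem_Ico.mpr ⟨le_refl _, hJ j0 hj0⟩
    have hUsub : ∀ t ∈ U, a ≤ t := by
      intro t ht
      obtain ⟨j, hj, htj⟩ := Finset.mem_biUnion.mp ht
      exact le_trans (hmin j hj) (Finset.mem_Ico.mp htj).1
    classical
    have hex : ∃ t, a ≤ t ∧ t ∉ U := by
      refine ⟨U.sup id + 1, ?_, ?_⟩
      · exact le_trans (Finset.le_sup (f := id) haU) (Nat.le_succ _)
      · intro h
        have := Finset.le_sup (f := id) h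
        simp only [id] at this
        omega
    set b := Nat.find hex with hb
    have hbspec : a ≤ b ∧ b ∉ U := Nat.find_spec hex
    have hIb : ∀ t, a ≤ t → t < b → t ∈ U := by
      intro t hat htb
      by_contra htU
      exact Nat.find_min hex htb ⟨hat, htU⟩
    have hab : a < b := by
      rcases lt_or_eq_of_le hbspec.1 with h | h
      · exact h
      · exact absurd (h ▸ haU) hbspec.2
    set K := J.filter (fun j => d j ≤ b) with hK
    have hj0K : j0 ∈ K := by
      refine Finset.mem_filter.mpr ⟨hj0, ?_⟩
      by_contra h
      push_neg at h
      exact hbspec.2 (Finset.mem_biUnion.mpr ⟨j0, hj0,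
        Finset.mem_Ico.mpr ⟨hbspec.1, h⟩⟩)
    -- jobs outside K have r j > b
    have hout : ∀ j ∈ J \ K, b < r j := by
      intro j hj
      rw [Finset.mem_sdiff] at hj
      have hdb : b < d j := by
        have := hj.2
        simp [hK, Finset.mem_filter, hj.1] at this
        omega
      by_contra h
      push_neg at h
      exact hbspec.2 (Finset.mem_biUnion.mpr ⟨j, hj.1,
        Finset.mem_Ico.mpr ⟨h, hdb⟩⟩)
    have hJKeq : J \ K = J.filter (fun j => ¬ d j ≤ b) := by
      ext j
      simp [hK, Finset.mem_sdiff, Finset.mem_filter]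
      tauto
    have hsplit : ∑ j ∈ J, p j = ∑ j ∈ K, p j + ∑ j ∈ J \ K, p j := by
      rw [hJKeq, hK, Finset.sum_filter_add_sum_filter_not]
    have hKsum : ∑ j ∈ K, p j ≤ b - a := by
      refine le_trans (Finset.sum_le_sum_of_subset ?_) (hload a b (le_of_lt hab))
      intro j hj
      rw [Finset.mem_filter] at hj ⊢
      exact ⟨Finset.mem_univ _, hmin j hj.1, hj.2⟩
    have hIH : ∑ j ∈ J \ K, p j ≤ ((J \ K).biUnion fun j => Finset.Ico (r j) (d j)).card := by
      refine IH (J \ K) ?_ (fun j hj => hJ j (Finset.mem_sdiff.mp hj).1)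
      refine Finset.ssubset_iff_of_subset (Finset.sdiff_subset) |>.mpr ⟨j0, hj0, ?_⟩
      simp [Finset.mem_sdiff, hj0, hj0K]
    -- disjoint union inside U
    have hIcoU : Finset.Ico a b ⊆ U := fun t ht => by
      rw [Finset.mem_Ico] at ht; exact hIb t ht.1 ht.2
    have hrestU : ((J \ K).biUnion fun j => Finset.Ico (r j) (d j)) ⊆ U := by
      apply Finset.biUnion_subset_biUnion_of_subset_left
      exact Finset.sdiff_subset
    have hdisj : Disjoint (Finset.Ico a b) ((J \ K).biUnion fun j => Finset.Ico (r j) (d j)) := by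
      rw [Finset.disjoint_left]
      intro t ht ht'
      rw [Finset.mem_Ico] at ht
      obtain ⟨j, hj, htj⟩ := Finset.mem_biUnion.mp ht'
      have := hout j hj
      have := (Finset.mem_Ico.mp htj).1
      omega
    have hcard : (b - a) + ((J \ K).biUnion fun j => Finset.Ico (r j) (d j)).card ≤ U.card := by
      have : (Finset.Ico a b).card = b - a := Nat.card_Ico a b
      rw [← this, ← Finset.card_union_of_disjoint hdisj]
      exact Finset.card_le_card (Finset.union_subset hIcoU hrestU)
    omega

/-- Sufficiency of the interval load condition for discrete-time preemptive
single-machine feasibility: if for all `a ≤ b` the work that must fit in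
`[a, b)` is at most `b - a`, then a feasible preemptive schedule exists. -/
theorem interval_load_implies_feasible (n : ℕ) (p r d : Fin n → ℕ)
    (hload : ∀ a b : ℕ, a ≤ b →
      ∑ j ∈ Finset.univ.filter (fun j => a ≤ r j ∧ d j ≤ b), p j ≤ b - a) :
    ∃ σ : ℕ → Option (Fin n),
      ∀ j, (∀ t, σ t = some j → r j ≤ t ∧ t < d j) ∧
        ((Finset.Ico (r j) (d j)).filter (fun t => σ t = some j)).card = p j := by
  classical
  set ι := (j : Fin n) × Fin (p j) with hι
  have hp0 : ∀ j : Fin n, d j ≤ r j → p j = 0 := by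
    intro j hdr
    have := hload (r j) (r j) le_rfl
    have hj : j ∈ Finset.univ.filter (fun j' => r j ≤ r j' ∧ d j' ≤ r j) := by
      simp [hdr]
    have hle : p j ≤ ∑ j' ∈ Finset.univ.filter (fun j' => r j ≤ r j' ∧ d j' ≤ r j), p j' :=
      Finset.single_le_sum (fun _ _ => Nat.zero_le _) hj
    omega
  have hall : ∀ s : Finset ι, s.card ≤ (s.biUnion fun u => Finset.Ico (r u.1) (d u.1)).card := by
    intro s
    set J := s.image Sigma.fst with hJ
    have h1 : s.card = ∑ j ∈ J, (s.filter fun u => u.1 = j).card :=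
      Finset.card_eq_sum_card_image Sigma.fst s
    have h2 : ∀ j ∈ J, (s.filter fun u => u.1 = j).card ≤ p j := by
      intro j _
      have : (s.filter fun u => u.1 = j).card ≤ (Finset.range (p j)).card := by
        apply Finset.card_le_card_of_injOn (fun u => (u.2 : ℕ))
        · intro u hu
          rw [Finset.mem_coe, Finset.mem_filter] at hu
          rcases u with ⟨ju, ku⟩
          cases hu.2
          simp only [Finset.mem_coe, Finset.mem_range]; exact ku.2
        · intro u hu v hv huv
          rw [Finset.mem_coe, Finset.mem_filter] at hu hv
          rcases u with ⟨ju, ku⟩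
          rcases v with ⟨jv, kv⟩
          obtain rfl : ju = jv := hu.2.trans hv.2.symm
          simp only at huv
          exact congrArg _ (Fin.val_injective huv)
      simpa using this
    have h3 : ∀ j ∈ J, r j < d j := by
      intro j hj
      obtain ⟨u, _, rfl⟩ := Finset.mem_image.mp hj
      by_contra h
      push_neg at h
      have h0 := hp0 u.1 h
      have h1 := u.2.2
      omega
    have h4 : s.biUnion (fun u => Finset.Ico (r u.1) (d u.1))
        = J.biUnion fun j => Finset.Ico (r j) (d j) :=
      (Finset.image_biUnion (f := Sigma.fst) (s := s)
        (t := fun j => Finset.Ico (r j) (d j))).symm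
    calc s.card = ∑ j ∈ J, (s.filter fun u => u.1 = j).card := h1
      _ ≤ ∑ j ∈ J, p j := Finset.sum_le_sum h2
      _ ≤ (J.biUnion fun j => Finset.Ico (r j) (d j)).card :=
          key_load n p r d hload J h3
      _ = _ := (congrArg Finset.card h4).symm
  obtain ⟨f, hfinj, hfmem⟩ :=
    (Finset.all_card_le_biUnion_card_iff_exists_injective
      (fun u : ι => Finset.Ico (r u.1) (d u.1))).mp hall
  refine ⟨fun t => if h : ∃ u : ι, f u = t then some h.choose.1 else none, fun j => ?_⟩
  have hσ : ∀ t (u : ι), f u = t →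
      (if h : ∃ u : ι, f u = t then some h.choose.1 else none) = some u.1 := by
    intro t u hu
    have h : ∃ u : ι, f u = t := ⟨u, hu⟩
    rw [dif_pos h]
    congr 1
    exact congrArg Sigma.fst (hfinj (h.choose_spec.trans hu.symm))
  constructor
  · intro t ht
    simp only at ht
    by_cases h : ∃ u : ι, f u = t
    · rw [dif_pos h] at ht
      have hjj : h.choose.1 = j := Option.some_injective _ ht
      have := hfmem h.choose
      rw [h.choose_spec, hjj] at this
      exact Finset.mem_Ico.mp this
    · rw [dif_neg h] at ht; exact absurd ht (by simp)
  · have heq : ((Finset.Ico (r j) (d j)).filter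
        (fun t => (if h : ∃ u : ι, f u = t then some h.choose.1 else none) = some j))
        = Finset.image (fun k : Fin (p j) => f ⟨j, k⟩) Finset.univ := by
      ext t
      simp only [Finset.mem_filter, Finset.mem_image, Finset.mem_univ, true_and]
      constructor
      · rintro ⟨htIco, ht⟩
        by_cases h : ∃ u : ι, f u = t
        · obtain ⟨u, hu⟩ := h
          have hdu := hσ t u hu
          have hjj : u.1 = j := Option.some_injective _ (hdu.symm.trans ht)
          rcases u with ⟨j', k'⟩
          cases hjj
          exact ⟨k', hu⟩
        · rw [dif_neg h] at ht; exact absurd ht (by simp)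
      · rintro ⟨k, rfl⟩
        refine ⟨hfmem ⟨j, k⟩, hσ _ ⟨j, k⟩ rfl⟩
    rw [heq, Finset.card_image_of_injective _ (fun k k' hkk => ?_), Finset.card_univ,
      Fintype.card_fin]
    have := hfinj hkk
    exact Fin.val_injective
      (congrArg (fun u : ι => ((u.2 : ℕ))) this)
end
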